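/- Let K be a subfield of Q̄. Then span_ℚ G_K = {α ∈ G : τα = α in G for every τ ∈ Aut(Q̄/K)}; that is, the class of α ∈ Q̄^× in G lies in span_ℚ G_K if and only if for every τ ∈ Aut(Q̄/K) the quotient (τα)/α is a root of unity. -/

import Mathlib

noncomputable section

/-- A fixed algebraic closure of `ℚ`. -/
abbrev Qbar : Type := AlgebraicClosure ℚ

/-- The primitive integer minimal polynomial of an algebraic number. -/
noncomputable def intMinpoly (α : Qbar) : Polynomial ℤ :=
  (IsLocalization.integerNormalization (nonZeroDivisors ℤ) (minpoly ℚ α)).primPart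

/-- The absolute logarithmic Weil height of an algebraic number, defined via the
(logarithmic) Mahler measure of its primitive integer minimal polynomial. -/
noncomputable def weilHeight (α : Qbar) : ℝ :=
  ((minpoly ℚ α).natDegree : ℝ)⁻¹ *
    (Real.log |((intMinpoly α).leadingCoeff : ℝ)| +
      (((intMinpoly α).map (Int.castRingHom ℂ)).roots.map
        (fun z => Real.log (max 1 ‖z‖))).sum)

/-- `σ` is an automorphism of `Q̄` fixing `K` pointwise, i.e. `σ ∈ Aut(Q̄/K)`. -/
def fixes (K : Subfield Qbar) (σ : Qbar ≃+* Qbar) : Prop := ∀ x ∈ K, σ x = x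

/-- The group `Q̄^×`. -/
abbrev Qx : Type := Qbarˣ

/-- `G = Q̄^× / Tor(Q̄^×)`. -/
abbrev GG : Type := Qx ⧸ CommGroup.torsion Qx

/-- The Weil height descends to `G`: since `h` is constant on cosets of the torsion
subgroup, the infimum below equals the common value of `h` at any representative. -/
noncomputable def hG (x : GG) : ℝ :=
  sInf {r : ℝ | ∃ u : Qx, (QuotientGroup.mk u : GG) = x ∧ r = weilHeight (u : Qbar)}

/-- The image `G_K` of `K^×` in `G`. -/
def GK (K : Subfield Qbar) : Set GG :=
  {x | ∃ u : Qx, (u : Qbar) ∈ K ∧ (QuotientGroup.mk u : GG) = x}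

/-- `span_ℚ G_K = { β ∈ G : β^m ∈ G_K for some nonzero integer m }`. -/
def spanGK (K : Subfield Qbar) : Set GG :=
  {x | ∃ m : ℤ, m ≠ 0 ∧ x ^ m ∈ GK K}

/-- The action of an automorphism of `Q̄` on `G = Q̄^×/Tor(Q̄^×)`. -/
def autG (σ : Qbar ≃+* Qbar) : GG →* GG :=
  QuotientGroup.map _ _ (Units.map (σ : Qbar →* Qbar))
    (fun u hu => by
      rw [Subgroup.mem_comap]
      rw [CommGroup.mem_torsion] at hu ⊢
      exact MonoidHom.isOfFinOrder _ hu)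

/-- The orbit of `x ∈ G` under the action of `Aut(Q̄/K)` on `G`. -/
def OrbG (K : Subfield Qbar) (x : GG) : Set GG :=
  {y | ∃ σ : Qbar ≃+* Qbar, fixes K σ ∧ y = autG σ x}

/-- `E_K = { α ∈ G : ∏_{β ∈ Orb_K(α)} β = 1 }`. -/
def EK (K : Subfield Qbar) : Set GG :=
  {x | (∏ᶠ y ∈ OrbG K x, y) = 1}

/-!
If `β ^ m` comes from `K`, then `τ β / β` is an element of the torsion-free group `G` killed
by `m`, hence trivial. Conversely, if every `τ α / α` is a root of unity, these roots of unity
are finitely many (`τ α` is a root of the minimal polynomial of `α` over `K`), so they have a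
common order `N`; then `α ^ N` is fixed by `Aut(Q̄/K)` and lies in `K` because `Q̄/K` is Galois.
-/

instance (K : Subfield Qbar) : Algebra.IsAlgebraic K Qbar :=
  have : Algebra.IsAlgebraic ℚ Qbar := AlgebraicClosure.isAlgebraic ℚ
  .tower_top (K := ℚ) K

instance (K : Subfield Qbar) : IsAlgClosure K Qbar := ⟨inferInstance, inferInstance⟩

theorem Set.Finite.exists_pos_pow_eq_one {M : Type*} [Monoid M] {S : Set M} (hS : S.Finite)
    (h : ∀ x ∈ S, IsOfFinOrder x) : ∃ n, 0 < n ∧ ∀ x ∈ S, x ^ n = 1 :=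
  ⟨∏ x ∈ hS.toFinset, orderOf x,
    Finset.prod_pos fun x hx => (h x (hS.mem_toFinset.1 hx)).orderOf_pos,
    fun _ hx => orderOf_dvd_iff_pow_eq_one.1 (Finset.dvd_prod_of_mem _ (hS.mem_toFinset.2 hx))⟩

section

variable {K : Subfield Qbar}

def fixes.toAlgEquiv {σ : Qbar ≃+* Qbar} (hσ : fixes K σ) : Qbar ≃ₐ[K] Qbar :=
  AlgEquiv.ofRingEquiv (f := σ) fun k => hσ k k.2

theorem mem_of_forall_fixes {x : Qbar} (hx : ∀ σ : Qbar ≃+* Qbar, fixes K σ → σ x = x) :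
    x ∈ K := by
  obtain ⟨k, rfl⟩ := (InfiniteGalois.mem_range_algebraMap_iff_fixed (k := K) x).2
    fun σ => hx σ.toRingEquiv fun k hk => σ.commutes ⟨k, hk⟩
  exact k.2

theorem fixes.apply_mem_rootSet_minpoly {σ : Qbar ≃+* Qbar} (hσ : fixes K σ) (x : Qbar) :
    σ x ∈ (minpoly K x).rootSet Qbar :=
  (Polynomial.mem_rootSet).2 ⟨minpoly.ne_zero (Algebra.IsIntegral.isIntegral x),
    (isConjRoot_of_algEquiv x hσ.toAlgEquiv).aeval_eq_zero⟩

theorem finite_setOf_apply_div (K : Subfield Qbar) (x : Qbar) :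
    {y | ∃ σ : Qbar ≃+* Qbar, fixes K σ ∧ y = σ x / x}.Finite :=
  ((Polynomial.rootSet_finite _ _).image (· / x)).subset
    fun _ ⟨_, hσ, hy⟩ => ⟨_, hσ.apply_mem_rootSet_minpoly x, hy.symm⟩

theorem exists_pow_mem_of_forall_isOfFinOrder {x : Qbar} (hx : x ≠ 0)
    (h : ∀ σ : Qbar ≃+* Qbar, fixes K σ → IsOfFinOrder (σ x / x)) :
    ∃ n, 0 < n ∧ x ^ n ∈ K := by
  obtain ⟨n, hn, hpow⟩ := (finite_setOf_apply_div K x).exists_pos_pow_eq_one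
    fun _ ⟨σ, hσ, hy⟩ => hy ▸ h σ hσ
  refine ⟨n, hn, mem_of_forall_fixes fun σ hσ => ?_⟩
  have := hpow _ ⟨σ, hσ, rfl⟩
  rwa [div_pow, div_eq_one_iff_eq (pow_ne_zero n hx), ← map_pow] at this

theorem autG_mk (σ : Qbar ≃+* Qbar) (u : Qx) :
    autG σ u = (Units.map (σ : Qbar →* Qbar) u : Qx) := rfl

theorem autG_mk_eq_mk_iff (σ : Qbar ≃+* Qbar) (u : Qx) :
    autG σ u = u ↔ IsOfFinOrder (σ u / u) := by
  rw [autG_mk, QuotientGroup.eq_iff_div_mem, CommGroup.mem_torsion, ← Units.isOfFinOrder_val,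
    Units.val_div_eq_div_val]
  rfl

theorem autG_mk_of_mem {σ : Qbar ≃+* Qbar} (hσ : fixes K σ) {u : Qx} (hu : (u : Qbar) ∈ K) :
    autG σ u = u := by
  rw [autG_mk]
  exact congrArg _ (Units.ext (hσ _ hu))

theorem autG_eq_self_of_mem_spanGK {σ : Qbar ≃+* Qbar} (hσ : fixes K σ) {x : GG}
    (hx : x ∈ spanGK K) : autG σ x = x := by
  obtain ⟨m, hm, u, hu, hux⟩ := hx
  rw [← zpow_left_inj hm, ← map_zpow, ← hux, autG_mk_of_mem hσ hu]

theorem mem_spanGK_of_forall_autG_eq_self {x : GG}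
    (hx : ∀ σ : Qbar ≃+* Qbar, fixes K σ → autG σ x = x) : x ∈ spanGK K := by
  obtain ⟨u, rfl⟩ := QuotientGroup.mk_surjective x
  obtain ⟨n, hn, hu⟩ := exists_pow_mem_of_forall_isOfFinOrder u.ne_zero
    fun σ hσ => (autG_mk_eq_mk_iff σ u).1 (hx σ hσ)
  exact ⟨n, by exact_mod_cast hn.ne', u ^ n, by simpa using hu, by simp⟩

theorem spanGK_eq_setOf_forall_autG_eq_self (K : Subfield Qbar) :
    spanGK K = {x : GG | ∀ σ : Qbar ≃+* Qbar, fixes K σ → autG σ x = x} :=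
  Set.ext fun _ => ⟨fun hx _ hσ => autG_eq_self_of_mem_spanGK hσ hx,
    mem_spanGK_of_forall_autG_eq_self⟩

end

/-- Identity (3.13): `span_ℚ G_K` is the set of fixed points of the action of
`Aut(Q̄/K)` on `G`; equivalently, the class of `α ∈ Q̄^×` lies in `span_ℚ G_K` iff
`(τα)/α` is a root of unity for every `τ ∈ Aut(Q̄/K)`. -/
theorem stmt9 (K : Subfield Qbar) :
    spanGK K = {x : GG | ∀ σ : Qbar ≃+* Qbar, fixes K σ → autG σ x = x} ∧
    (∀ u : Qx, (QuotientGroup.mk u : GG) ∈ spanGK K ↔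
      ∀ σ : Qbar ≃+* Qbar, fixes K σ →
        ∃ n : ℕ, 0 < n ∧ (σ (u : Qbar) / (u : Qbar)) ^ n = 1) := by
  refine ⟨spanGK_eq_setOf_forall_autG_eq_self K, fun u => ?_⟩
  simp only [spanGK_eq_setOf_forall_autG_eq_self, Set.mem_ofPred_eq, autG_mk_eq_mk_iff,
    isOfFinOrder_iff_pow_eq_one]

end
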